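/- (Tree structure / uniqueness of the parent.) Let n ≥ 2 and let Y be a Dyck path of semilength n with Y ≠ p_n. Then there exists exactly one Dyck path X of semilength n such that Y ∈ θ(X). -/

import Mathlib

open List DyckStep


/-- The pyramid `p_n = U^n D^n`. -/
def pyr (n : ℕ) : List DyckStep := replicate n U ++ replicate n D

/-- A word is *active* if every proper nonempty prefix contains strictly more `U`s than `D`s. -/
def IsActive (w : List DyckStep) : Prop :=
  ∀ i, 0 < i → i < w.length → (w.take i).count D < (w.take i).count U

/-- The length of the last descent (maximal final run of `D`s). -/
def lastDescentLen (w : List DyckStep) : ℕ := (w.reverse.takeWhile (· == D)).length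

/-- The length of the last ascent (run of `U`s immediately preceding the last descent). -/
def lastAscentLen (w : List DyckStep) : ℕ :=
  ((w.reverse.dropWhile (· == D)).takeWhile (· == U)).length

/-- The word with its trailing `D`s removed. -/
def stripD (w : List DyckStep) : List DyckStep := (w.reverse.dropWhile (· == D)).reverse

/-- The inner of a word: the word with its first and its last letter removed. -/
def inner (w : List DyckStep) : List DyckStep := w.dropLast.tail

/-- The operator `θ`.  For an active `P = U·Q·D` with `Q = R·D^m` (`R` not ending in `D`),
`θ(P) = { R·D^(m-j)·U·D^(j+1) : 0 ≤ j ≤ m }`, where moreover `j = m` is excluded if `P` is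
the pyramid; `θ(P) = ∅` if `P` is not active. -/
def theta (P : List DyckStep) : Set (List DyckStep) :=
  { Y | IsActive P ∧ ∃ j ≤ lastDescentLen (inner P),
      (P = pyr (P.count U) → j < lastDescentLen (inner P)) ∧
      Y = stripD (inner P) ++
        (replicate (lastDescentLen (inner P) - j) D ++ (U :: replicate (j + 1) D)) }

/-- Auxiliary: remove the first occurrence of the factor `DU`. -/
def removeFirstDU : List DyckStep → List DyckStep
  | .D :: .U :: rest => rest
  | x :: rest => x :: removeFirstDU rest
  | [] => []

/-- `τ`: delete the rightmost peak (last occurrence of the factor `UD`),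
then prepend a `U` and append a `D`. -/
def tau (w : List DyckStep) : List DyckStep :=
  U :: ((removeFirstDU w.reverse).reverse ++ [D])

/-- The number of peaks (occurrences of the factor `UD`). -/
def numPeaks (w : List DyckStep) : ℕ :=
  ((w.zip w.tail).filter (fun p => p.1 == U && p.2 == D)).length

/-- Auxiliary: swap the first occurrence of the factor `DU` into `UD`. -/
def swapFirstDU : List DyckStep → List DyckStep
  | .D :: .U :: rest => .U :: .D :: rest
  | x :: rest => x :: swapFirstDU rest
  | [] => []

/-- Overturn the rightmost peak: replace the last occurrence of the factor `UD` by `DU`. -/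
def overturnLastPeak (w : List DyckStep) : List DyckStep := (swapFirstDU w.reverse).reverse

/-- The word with its trailing `U`s removed. -/
def stripU (w : List DyckStep) : List DyckStep := (w.reverse.dropWhile (· == U)).reverse

/-- The length of the final run of `U`s. -/
def trailU (w : List DyckStep) : ℕ := (w.reverse.takeWhile (· == U)).length

/-- `op3`: for `P = S·U^a·D^b·U·D` (`S` not ending in `U`, `a, b ≥ 1`), remove the final
pyramid `p_1 = UD`, prepend a `U` and insert a `D` immediately before the last `U` of the
last ascent, giving `U·S·U^(a-1)·D·U·D^b`. -/
def op3 (P : List DyckStep) : List DyckStep :=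
  let W := P.dropLast.dropLast
  U :: (stripU (stripD W) ++
    (replicate (trailU (stripD W) - 1) U ++ (D :: U :: replicate (lastDescentLen W) D)))

/-- The heights of the valleys (occurrences of the factor `DU`) of a word. -/
def valleyHeights (w : List DyckStep) : List ℕ :=
  (List.range w.length).filterMap fun i =>
    if (w.drop i).take 2 = [D, U] then
      some ((w.take (i + 1)).count U - (w.take (i + 1)).count D)
    else none


lemma count_U_add_count_D (w : List DyckStep) : w.count U + w.count D = w.length := by
  induction w with
  | nil => simp
  | cons a t ih => cases a <;> simp [count_cons] <;> omega

lemma takeWhile_D_rep (r : ℕ) (x : List DyckStep) :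
    ((replicate r D ++ x).takeWhile (· == D)) = replicate r D ++ x.takeWhile (· == D) := by
  induction r with
  | zero => simp
  | succ r ih => simp [replicate_succ, takeWhile_cons, ih]

lemma dropWhile_D_rep (r : ℕ) (x : List DyckStep) :
    ((replicate r D ++ x).dropWhile (· == D)) = x.dropWhile (· == D) := by
  induction r with
  | zero => simp
  | succ r ih => simp [replicate_succ, dropWhile_cons, ih]

lemma takeWhile_D_eq_rep (l : List DyckStep) :
    l.takeWhile (· == D) = replicate (l.takeWhile (· == D)).length D := by
  rw [eq_replicate_iff]
  refine ⟨rfl, fun b hb => ?_⟩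
  simpa using mem_takeWhile_imp hb

lemma stripD_decomp (w : List DyckStep) :
    w = stripD w ++ replicate (lastDescentLen w) D := by
  unfold stripD lastDescentLen
  conv_lhs => rw [← w.reverse_reverse,
    ← takeWhile_append_dropWhile (p := (· == D)) (l := w.reverse)]
  rw [reverse_append]
  congr 1
  conv_lhs => rw [takeWhile_D_eq_rep]
  rw [reverse_replicate]

lemma lastDescentLen_D_rep (w : List DyckStep) (r : ℕ) :
    lastDescentLen (w ++ replicate r D) = lastDescentLen w + r := by
  unfold lastDescentLen
  rw [reverse_append, reverse_replicate, takeWhile_D_rep, length_append, length_replicate]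
  omega

lemma stripD_D_rep (w : List DyckStep) (r : ℕ) :
    stripD (w ++ replicate r D) = stripD w := by
  unfold stripD
  rw [reverse_append, reverse_replicate, dropWhile_D_rep]

lemma lastDescentLen_U_rep (w : List DyckStep) (r : ℕ) :
    lastDescentLen (w ++ U :: replicate r D) = r := by
  unfold lastDescentLen
  rw [reverse_append, reverse_cons, reverse_replicate, append_assoc, takeWhile_D_rep]
  simp [takeWhile_cons]

lemma stripD_U_rep (w : List DyckStep) (r : ℕ) :
    stripD (w ++ U :: replicate r D) = w ++ [U] := by
  unfold stripD
  rw [reverse_append, reverse_cons, reverse_replicate, append_assoc, dropWhile_D_rep]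
  simp [dropWhile_cons]

lemma lastDescentLen_rep_U (a : ℕ) : lastDescentLen (replicate a U) = 0 := by
  unfold lastDescentLen
  rw [reverse_replicate, takeWhile_replicate]
  simp

lemma stripD_concat_U (w : List DyckStep) (h : stripD w ≠ []) :
    ∃ T, stripD w = T ++ [U] := by
  unfold stripD at *
  set d := w.reverse.dropWhile (· == D) with hd
  have hdne : d ≠ [] := by intro h'; rw [h'] at h; simp at h
  obtain ⟨x, t, hxt⟩ := exists_cons_of_ne_nil hdne
  have hx : x = U := by
    have h2 := head?_dropWhile_not (· == D) w.reverse
    rw [hd.symm.trans hxt] at h2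
    simp only [head?_cons] at h2
    rcases x.dichotomy with h' | h'
    · exact h'
    · simp [h'] at h2
  refine ⟨t.reverse, ?_⟩
  rw [hxt, reverse_cons, hx]

/-- Tree structure: every Dyck path of semilength `n` other than the pyramid has exactly
one parent in the `θ`-generating tree. -/
theorem stmt5 (n : ℕ) (hn : 2 ≤ n) (Y : DyckWord) (hY : Y.semilength = n)
    (hne : Y.toList ≠ pyr n) :
    ∃! X : DyckWord, X.semilength = n ∧ Y.toList ∈ theta X.toList := by
  have hcU : Y.toList.count U = n := hY
  have hcD : Y.toList.count D = n := by rw [← Y.count_U_eq_count_D]; exact hY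
  set L := Y.toList with hLdef
  set k := lastDescentLen L with hk
  have hdec := stripD_decomp L
  have hsne : stripD L ≠ [] := by
    intro h
    rw [h, nil_append] at hdec
    rw [hdec] at hcU
    simp [count_replicate] at hcU
    omega
  obtain ⟨T, hT⟩ := stripD_concat_U L hsne
  have hL : L = T ++ (U :: replicate k D) := by
    rw [hdec, hT, append_assoc]; rfl
  have hTU : T.count U + 1 = n := by
    rw [hL] at hcU
    simp [count_append, count_cons, count_replicate] at hcU
    omega
  have hTD : T.count D + k = n := by
    rw [hL] at hcD
    simp [count_append, count_cons, count_replicate] at hcD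
    omega
  have hk1 : 1 ≤ k := by
    by_contra h
    have hple := Y.count_D_le_count_U T.length
    rw [← hLdef, hL, take_append_of_le_length le_rfl, take_length] at hple
    omega
  have hkn : k < n := by
    by_contra h
    have hTall : T = replicate T.length U := by
      rw [eq_replicate_length]
      intro b hb
      rcases b.dichotomy with h' | h'
      · exact h'
      · exfalso
        rw [h'] at hb
        have := count_pos_iff.mpr hb
        omega
    have hTlen : T.length = n - 1 := by
      have := count_U_add_count_D T
      rw [hTall] at hTU hTD
      simp [count_replicate] at hTU hTD
      omega
    apply hne
    rw [hL, hTall, hTlen]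
    have hkeq : k = n := by omega
    rw [hkeq]
    show replicate (n-1) U ++ ([U] ++ replicate n D) = pyr n
    rw [← append_assoc, ← replicate_succ']
    have : n - 1 + 1 = n := by omega
    rw [this]
    rfl
  have hprefT : ∀ j, (T.take j).count D ≤ (T.take j).count U := by
    intro j
    rcases le_or_gt j T.length with h | h
    · have := Y.count_D_le_count_U j
      rw [← hLdef, hL, take_append_of_le_length h] at this
      exact this
    · rw [take_of_length_le (le_of_lt h)]
      omega
  -- the candidate parent as a list
  have hbal : (U :: (T ++ replicate k D)).count U = (U :: (T ++ replicate k D)).count D := by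
    simp [count_cons, count_append, count_replicate]
    omega
  have hDle : ∀ i, ((U :: (T ++ replicate k D)).take i).count D ≤
      ((U :: (T ++ replicate k D)).take i).count U := by
    intro i
    cases i with
    | zero => simp
    | succ j =>
      rw [take_succ_cons, take_append, take_replicate]
      have hmin : min (j - T.length) k ≤ k := min_le_right _ _
      have hpj := hprefT j
      rcases le_or_gt j T.length with h | h
      · have h0 : j - T.length = 0 := by omega
        rw [h0]
        simp [count_cons, count_append, count_replicate]
        omega
      · rw [take_of_length_le (le_of_lt h)] at hpj ⊢
        simp [count_cons, count_append, count_replicate]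
        omega
  have hact : IsActive (U :: (T ++ replicate k D)) := by
    intro i hi0 hilen
    obtain ⟨j, rfl⟩ : ∃ j, i = j + 1 := ⟨i - 1, by omega⟩
    have hlen : (U :: (T ++ replicate k D)).length = 1 + T.length + k := by
      simp [length_append, length_replicate]
      omega
    rw [hlen] at hilen
    rw [take_succ_cons, take_append, take_replicate]
    have hpj := hprefT j
    rcases le_or_gt j T.length with h | h
    · have h0 : j - T.length = 0 := by omega
      rw [h0]
      simp [count_cons, count_append, count_replicate]
      omega
    · rw [take_of_length_le (le_of_lt h)] at hpj ⊢
      have hjk : j - T.length ≤ k - 1 := by omega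
      have hmin : min (j - T.length) k ≤ k - 1 := le_trans (min_le_left _ _) hjk
      simp [count_cons, count_append, count_replicate]
      omega
  have hinner : _root_.inner (U :: (T ++ replicate k D)) = T ++ replicate (k-1) D := by
    unfold _root_.inner
    have hrep : replicate k D = replicate (k-1) D ++ [D] := by
      conv_lhs => rw [show k = (k-1)+1 by omega]
      rw [replicate_succ']
    rw [hrep]
    rw [show U :: (T ++ (replicate (k-1) D ++ [D])) =
      (U :: (T ++ replicate (k-1) D)) ++ [D] by rw [cons_append, append_assoc]]
    rw [dropLast_concat]
    rfl
  have hmval : lastDescentLen (_root_.inner (U :: (T ++ replicate k D)))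
      = lastDescentLen T + (k-1) := by
    rw [hinner, lastDescentLen_D_rep]
  have hsval : stripD (_root_.inner (U :: (T ++ replicate k D))) = stripD T := by
    rw [hinner, stripD_D_rep]
  have hXcount : (U :: (T ++ replicate k D)).count U = n := by
    simp [count_cons, count_append, count_replicate]
    omega
  refine ⟨⟨U :: (T ++ replicate k D), hbal, hDle⟩, ⟨hXcount, ?_⟩, ?_⟩
  · -- membership
    refine ⟨hact, k - 1, ?_, ?_, ?_⟩
    · rw [hmval]; omega
    · intro hpyrX
      rw [hXcount] at hpyrX
      unfold pyr at hpyrX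
      rw [show replicate n U = U :: replicate (n-1) U by
        conv_lhs => rw [show n = (n-1)+1 by omega]
        rw [replicate_succ], cons_append] at hpyrX
      have h2 : T ++ replicate k D = replicate (n-1) U ++ replicate n D := by
        simpa using hpyrX
      rw [show replicate n D = replicate (n-k) D ++ replicate k D by
        rw [← replicate_add]; congr 1; omega, ← append_assoc] at h2
      have h4 : T = replicate (n-1) U ++ replicate (n-k) D := append_cancel_right h2
      rw [hmval, h4, lastDescentLen_D_rep, lastDescentLen_rep_U]
      omega
    · rw [hsval, hmval]
      rw [show lastDescentLen T + (k-1) - (k-1) = lastDescentLen T by omega,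
        show k - 1 + 1 = k by omega, ← append_assoc, ← stripD_decomp T]
      exact hL
  · -- uniqueness
    rintro Z ⟨hZsemi, hZact, j', hj'le, -, heq'⟩
    have hZ0 : Z ≠ 0 := by
      intro h
      rw [h] at hZsemi
      simp at hZsemi
      omega
    have hZcons := DyckWord.cons_tail_dropLast_concat (p := Z) hZ0
    have hLeq : L = (stripD (_root_.inner Z.toList) ++
        replicate (lastDescentLen (_root_.inner Z.toList) - j') D) ++ (U :: replicate (j'+1) D) := by
      rw [heq', append_assoc]
    have hk' : k = j' + 1 := by
      rw [hk, hLeq, lastDescentLen_U_rep]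
    have hTeq : stripD (_root_.inner Z.toList)
        ++ replicate (lastDescentLen (_root_.inner Z.toList) - j') D = T := by
      have hstr : stripD L = (stripD (_root_.inner Z.toList) ++
          replicate (lastDescentLen (_root_.inner Z.toList) - j') D) ++ [U] := by
        rw [hLeq, stripD_U_rep]
      rw [hT] at hstr
      exact (append_cancel_right hstr.symm)
    have hMdec : _root_.inner Z.toList = T ++ replicate j' D := by
      have h5 := stripD_decomp (_root_.inner Z.toList)
      rw [show replicate (lastDescentLen (_root_.inner Z.toList)) D =
          replicate (lastDescentLen (_root_.inner Z.toList) - j') D ++ replicate j' D by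
        rw [← replicate_add]; congr 1; omega, ← append_assoc, hTeq] at h5
      exact h5
    apply DyckWord.ext
    show Z.toList = U :: (T ++ replicate k D)
    rw [← hZcons]
    show U :: (Z.toList.dropLast.tail ++ [D]) = _
    have : Z.toList.dropLast.tail = _root_.inner Z.toList := rfl
    rw [this, hMdec, append_assoc, ← replicate_succ', ← hk']
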